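/- arXiv:1610.07007 — 3 statements merged into one kernel-verified Lean document; each statement's English description precedes it below -/
import Mathlib

section
/- For every integer n ≥ 3 and every integer b with 0 ≤ b ≤ 3, (4n−2)(n−1)^{n−1} − 6(n−1)(n−2)^{n−1} − b·((n−1)^n − 2(n−1)(n−2)^{n−1}) + (n−3)^n > 0. -/
/-- Binomial/Bernoulli bound: `(a+1)^(b+1) ≥ a^(b+1) + (b+1) * a^b`. -/
lemma aux_bernoulli (a b : ℕ) : a ^ (b + 1) + (b + 1) * a ^ b ≤ (a + 1) ^ (b + 1) := by
  induction b with
  | zero => simp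
  | succ b ih =>
    have h : (a + 1) ^ (b + 2) = (a + 1) * (a + 1) ^ (b + 1) := by ring
    calc a ^ (b + 2) + (b + 2) * a ^ (b + 1)
        ≤ (a + 1) * (a ^ (b + 1) + (b + 1) * a ^ b) := by ring_nf; nlinarith [pow_nonneg (Nat.zero_le a) b, Nat.pow_le_pow_left (Nat.le_succ a) b]
      _ ≤ (a + 1) * (a + 1) ^ (b + 1) := Nat.mul_le_mul_left _ ih
      _ = (a + 1) ^ (b + 2) := by ring

lemma aux_key (k : ℕ) : 2 * (k + 1) ^ (k + 2) ≤ (k + 2) ^ (k + 2) := by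
  have h := aux_bernoulli (k + 1) (k + 1)
  have h2 : (k + 1) ^ (k + 2) ≤ (k + 2) * (k + 1) ^ (k + 1) := by
    have : (k + 1) ^ (k + 2) = (k + 1) * (k + 1) ^ (k + 1) := by ring
    rw [this]
    exact Nat.mul_le_mul_right _ (by omega)
  calc 2 * (k + 1) ^ (k + 2) = (k + 1) ^ (k + 2) + (k + 1) ^ (k + 2) := by ring
    _ ≤ (k + 1) ^ (k + 2) + (k + 2) * (k + 1) ^ (k + 1) := by omega
    _ ≤ (k + 1 + 1) ^ (k + 1 + 1) := h
    _ = (k + 2) ^ (k + 2) := by norm_num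

theorem stmt_15 (n : ℕ) (hn : 3 ≤ n) (b : ℤ) (hb0 : 0 ≤ b) (hb3 : b ≤ 3) :
    0 < (4 * (n : ℤ) - 2) * ((n : ℤ) - 1) ^ (n - 1) - 6 * ((n : ℤ) - 1) * ((n : ℤ) - 2) ^ (n - 1)
        - b * (((n : ℤ) - 1) ^ n - 2 * ((n : ℤ) - 1) * ((n : ℤ) - 2) ^ (n - 1))
        + ((n : ℤ) - 3) ^ n := by
  obtain ⟨k, rfl⟩ : ∃ k, n = k + 3 := ⟨n - 3, by omega⟩
  have h1 : k + 3 - 1 = k + 2 := by omega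
  rw [h1]
  push_cast
  set x : ℤ := (k : ℤ) with hx
  have hx0 : 0 ≤ x := Int.natCast_nonneg k
  have hP : (0:ℤ) < (x + 2) ^ (k + 2) := by positivity
  have hQ : (0:ℤ) ≤ (x + 1) ^ (k + 2) := by positivity
  have hR : (0:ℤ) ≤ x ^ (k + 3) := by positivity
  have hkey : 2 * (x + 1) ^ (k + 2) ≤ (x + 2) ^ (k + 2) := by
    have := aux_key k
    rw [hx]; exact_mod_cast this
  have hpow : (x + 3 - 1) ^ (k + 3) = (x + 2) * (x + 2) ^ (k + 2) := by
    have : x + 3 - 1 = x + 2 := by ring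
    rw [this, ← pow_succ']
  have e1 : (x:ℤ) + 3 - 1 = x + 2 := by ring
  have e2 : (x:ℤ) + 3 - 2 = x + 1 := by ring
  have e3 : (x:ℤ) + 3 - 3 = x := by ring
  rw [hpow, e1, e2, e3]
  have hC : 0 ≤ (x + 2) * ((x + 2) ^ (k + 2) - 2 * (x + 1) ^ (k + 2)) := by
    apply mul_nonneg (by linarith)
    linarith
  nlinarith [mul_nonneg (by linarith : (0:ℤ) ≤ 3 - b) hC, mul_pos (by linarith : (0:ℤ) < x + 4) hP]
end

section
/- For every integer n ≥ 3 and every integer b with 0 ≤ b ≤ 3, −3(n+1)(n−3)^{n−1} − 8(n−1)(n−2)^{n−1} + (9n−3)(n−1)^{n−1} − b·((n−1)^n − 3(n−1)(n−3)^{n−1}) > 0. -/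
lemma aux_pow (a c : ℤ) (ha : 0 ≤ a) (hc : 0 ≤ c) (k : ℕ) :
    a ^ (k+1) + (k+1) * c * a ^ k ≤ (a + c) ^ (k+1) := by
  induction k with
  | zero => simp
  | succ k ih =>
    have hp : (0:ℤ) ≤ a ^ k := pow_nonneg ha k
    have hp1 : (0:ℤ) ≤ a ^ (k+1) := pow_nonneg ha (k+1)
    have h : (a + c) ^ (k+2) = (a + c) * (a + c) ^ (k+1) := by ring
    have h2 : (a + c) * (a ^ (k+1) + (k+1) * c * a ^ k) ≤ (a + c) * (a + c) ^ (k+1) := by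
      apply mul_le_mul_of_nonneg_left ih (by linarith)
    have hps : a * a ^ k = a ^ (k+1) := by ring
    have hps2 : a * a ^ (k+1) = a ^ (k+2) := by ring
    push_cast
    push_cast at h2
    show a ^ (k+2) + ((k:ℤ) + 1 + 1) * c * a ^ (k+1) ≤ (a + c) ^ (k+2)
    have key : (a+c) * (a^(k+1) + ((k:ℤ)+1)*c*a^k)
        = a^(k+2) + ((k:ℤ)+1+1)*c*a^(k+1) + ((k:ℤ)+1)*(c*c)*a^k := by ring
    have hnn : 0 ≤ ((k:ℤ)+1)*(c*c)*a^k := by positivity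
    linarith

theorem stmt_16 (n : ℕ) (hn : 3 ≤ n) (b : ℤ) (hb0 : 0 ≤ b) (hb3 : b ≤ 3) :
    0 < -3 * ((n : ℤ) + 1) * ((n : ℤ) - 3) ^ (n - 1)
        - 8 * ((n : ℤ) - 1) * ((n : ℤ) - 2) ^ (n - 1)
        + (9 * (n : ℤ) - 3) * ((n : ℤ) - 1) ^ (n - 1)
        - b * (((n : ℤ) - 1) ^ n - 3 * ((n : ℤ) - 1) * ((n : ℤ) - 3) ^ (n - 1)) := by
  obtain ⟨m, rfl⟩ : ∃ m, n = m + 3 := ⟨n - 3, by omega⟩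
  have e1 : m + 3 - 1 = m + 2 := by omega
  rw [e1]
  push_cast
  have r1 : ((m:ℤ)+3-3) = (m:ℤ) := by ring
  have r2 : ((m:ℤ)+3-2) = (m:ℤ)+1 := by ring
  have r3 : ((m:ℤ)+3-1) = (m:ℤ)+2 := by ring
  rw [r1, r2, r3]
  have rpow : ((m:ℤ)+2) ^ (m+3) = ((m:ℤ)+2) * ((m:ℤ)+2) ^ (m+2) := by
    rw [pow_succ]; ring
  rw [rpow]
  have h1 := aux_pow (m:ℤ) 2 (by positivity) (by norm_num) (m+1)
  have h2 := aux_pow ((m:ℤ)+1) 1 (by positivity) (by norm_num) (m+1)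
  norm_num at h1 h2
  simp only [show m+1+1 = m+2 from rfl] at h1 h2
  rw [show ((m:ℤ)+1+1) = (m:ℤ)+2 by ring] at h1 h2
  set A : ℤ := (m:ℤ) ^ (m+2) with hA
  set B : ℤ := ((m:ℤ)+1) ^ (m+2) with hB
  set C : ℤ := ((m:ℤ)+2) ^ (m+2) with hC
  have hApos : 0 ≤ A := by positivity
  have hBpos : 0 < B := by positivity
  have hmA : (m:ℤ) * (m:ℤ) ^ (m+1) = A := by rw [hA]; ring
  have hmB : ((m:ℤ)+1) * ((m:ℤ)+1) ^ (m+1) = B := by rw [hB]; ring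
  have hC3 : 3 * A ≤ C := by nlinarith [pow_nonneg (by positivity : (0:ℤ) ≤ (m:ℤ)) (m+1)]
  have hC2 : 2 * B ≤ C := by nlinarith [pow_nonneg (by positivity : (0:ℤ) ≤ (m:ℤ)+1) (m+1)]
  have h3 : 0 ≤ (3 - b) * (((m:ℤ)+2) * (C - 3*A)) := by
    apply mul_nonneg (by linarith)
    apply mul_nonneg (by positivity) (by linarith)
  nlinarith [hBpos, hC2, hApos, h3, hC3]
end

section
/- Let u and v be commuting nilpotent-like classes in a commutative ring (arising as u = a·h + b·l and v = h + l where h, l commute and l² = 0). Then for all nonnegative integers i, j: u^i · v^j = a^i · h^{i+j} + (i·a^{i−1}·b + j·a^i) · h^{i+j−1} · l, and consequently ∑_{i+j=m} u^i v^j = P(m)·h^m + Q(m)·h^{m−1}·l with P(m) = ∑_{i=0}^m a^i and Q(m) = ∑_{i=0}^m (i·a^{i−1}b + (m−i)a^i). -/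
open Finset

section SqZero

variable {R : Type*} [CommSemiring R] {l : R}

theorem add_pow_of_sq_eq_zero (hl : l ^ 2 = 0) (x : R) :
    ∀ n : ℕ, (x + l) ^ n = x ^ n + n * x ^ (n - 1) * l
  | 0 => by simp
  | n + 1 => by
    rw [pow_succ, add_pow_of_sq_eq_zero hl x n, Nat.add_sub_cancel]
    cases n with
    | zero => simp
    | succ k =>
      calc (x ^ (k + 1) + ↑(k + 1) * x ^ (k + 1 - 1) * l) * (x + l)
          = x ^ (k + 1 + 1) + ↑(k + 1 + 1) * x ^ (k + 1) * l + (k + 1) * x ^ k * l ^ 2 := by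
            push_cast; ring
        _ = x ^ (k + 1 + 1) + ↑(k + 1 + 1) * x ^ (k + 1) * l := by rw [hl]; simp

theorem add_mul_pow_mul_add_pow_of_sq_eq_zero (hl : l ^ 2 = 0) (h a b : R) (i j : ℕ) :
    (a * h + b * l) ^ i * (h + l) ^ j
      = a ^ i * h ^ (i + j) + (i * a ^ (i - 1) * b + j * a ^ i) * h ^ (i + j - 1) * l := by
  have hbl : (b * l) ^ 2 = 0 := by rw [mul_pow, hl, mul_zero]
  rw [add_pow_of_sq_eq_zero hbl, add_pow_of_sq_eq_zero hl]
  rcases i with _ | i <;> rcases j with _ | j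
  · simp
  · simp
  · simp only [Nat.cast_add, Nat.cast_one, add_tsub_cancel_right, pow_zero, zero_tsub, mul_one, add_zero]
    ring
  · calc _ = a ^ (i + 1) * h ^ (i + 1 + (j + 1))
            + (↑(i + 1) * a ^ (i + 1 - 1) * b + ↑(j + 1) * a ^ (i + 1)) * h ^ (i + 1 + (j + 1) - 1) * l
            + (i + 1) * (j + 1) * a ^ i * b * h ^ (i + j) * l ^ 2 := by
          simp only [Nat.add_sub_cancel, show i + 1 + (j + 1) - 1 = i + j + 1 by omega]
          push_cast; ring
      _ = _ := by rw [hl]; simp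

theorem sum_add_mul_pow_mul_add_pow_of_sq_eq_zero (hl : l ^ 2 = 0) (h a b : R) (m : ℕ) :
    ∑ i ∈ range (m + 1), (a * h + b * l) ^ i * (h + l) ^ (m - i)
      = (∑ i ∈ range (m + 1), a ^ i) * h ^ m
        + (∑ i ∈ range (m + 1), (i * a ^ (i - 1) * b + ((m - i : ℕ) : R) * a ^ i))
          * h ^ (m - 1) * l := by
  rw [sum_mul, sum_mul, sum_mul, ← sum_add_distrib]
  refine sum_congr rfl fun i hi => ?_
  have him : i + (m - i) = m := Nat.add_sub_cancel' (Nat.lt_succ_iff.mp (mem_range.mp hi))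
  rw [add_mul_pow_mul_add_pow_of_sq_eq_zero hl, him]

end SqZero

theorem stmt_19 {R : Type*} [CommRing R] (h l : R) (hl : l ^ 2 = 0) (a b : ℕ) :
    (∀ i j : ℕ, ((a : R) * h + (b : R) * l) ^ i * (h + l) ^ j
        = (a : R) ^ i * h ^ (i + j)
          + ((i : R) * (a : R) ^ (i - 1) * (b : R) + (j : R) * (a : R) ^ i) * h ^ (i + j - 1) * l) ∧
    (∀ m : ℕ, ∑ i ∈ Finset.range (m + 1), ((a : R) * h + (b : R) * l) ^ i * (h + l) ^ (m - i)
        = (∑ i ∈ Finset.range (m + 1), (a : R) ^ i) * h ^ m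
          + (∑ i ∈ Finset.range (m + 1),
              ((i : R) * (a : R) ^ (i - 1) * (b : R) + ((m - i : ℕ) : R) * (a : R) ^ i))
            * h ^ (m - 1) * l) :=
  ⟨add_mul_pow_mul_add_pow_of_sq_eq_zero hl h a b,
    sum_add_mul_pow_mul_add_pow_of_sq_eq_zero hl h a b⟩
end
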